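/- Let N ≥ 2 be an integer, α > −1 and λ > 0 real numbers, and define U_{α,λ}(x) := log( c_N (α+1)^N λ^{N−1} / (1 + λ |x|^{N(α+1)/(N−1)})^N ) with c_N := N (N²/(N−1))^{N−1}. Then for every x ∈ ℝ^N \ {0}, −div( |∇U_{α,λ}|^{N−2} ∇U_{α,λ} )(x) = |x|^{Nα} e^{U_{α,λ}(x)}, where div denotes the Euclidean divergence, and moreover the function x ↦ |x|^{Nα} e^{U_{α,λ}(x)} is integrable on ℝ^N. -/

import Mathlib

/-!
`U_{α,λ}` is radial, `U(x) = φ(|x|)`, and with `p = N(α+1)/(N-1)` and the logistic-type ratio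
`h(r) = λ r^p / (1 + λ r^p)` one has `φ'(r) = -N p h(r) / r`. Hence
`|∇U|^{N-2} ∇U = -Φ(|x|) x / |x|^N` with `Φ = (N p h)^{N-1}`, and for such radial fields the
divergence is `-Φ'(r) / r^{N-1}`. Since `h' = p h (1 - h) / r`, the choice of `c_N` makes
`Φ'(r) = r^{N-1} · r^{Nα} e^{φ(r)}`, which is the equation. The same identity gives the finite mass:
in polar coordinates the density is `Φ'`, and `Φ` increases from `0` to `(N p)^{N-1}`.
-/

open MeasureTheory Filter
open scoped RealInnerProductSpace Topology

noncomputable section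

/-- The dimensional constant `c_N = N (N²/(N-1))^{N-1}`. -/
def cconst (N : ℕ) : ℝ := N * ((N : ℝ) ^ 2 / ((N : ℝ) - 1)) ^ (N - 1)

/-- The explicit radial family
`U_{α,λ}(x) = log( c_N (α+1)^N λ^{N-1} / (1 + λ|x|^{N(α+1)/(N-1)})^N )`. -/
def Ulam (N : ℕ) (α lam : ℝ) (x : EuclideanSpace ℝ (Fin N)) : ℝ :=
  Real.log (cconst N * (α + 1) ^ N * lam ^ (N - 1) /
    (1 + lam * ‖x‖ ^ ((N : ℝ) * (α + 1) / ((N : ℝ) - 1))) ^ N)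

/-- Euclidean divergence of a vector field on `ℝ^N`. -/
def ediv {N : ℕ} (F : EuclideanSpace ℝ (Fin N) → EuclideanSpace ℝ (Fin N))
    (x : EuclideanSpace ℝ (Fin N)) : ℝ :=
  ∑ i, fderiv ℝ F x (EuclideanSpace.single i 1) i

section Radial

variable {E : Type*} [NormedAddCommGroup E] [InnerProductSpace ℝ E]

theorem hasFDerivAt_norm_of_ne_zero {x : E} (hx : x ≠ 0) :
    HasFDerivAt (‖·‖) (‖x‖⁻¹ • innerSL ℝ x) x := by
  have hx' : 0 < ‖x‖ := norm_pos_iff.mpr hx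
  have h := (hasStrictFDerivAt_norm_sq x).hasFDerivAt.sqrt (by positivity)
  simp only [Real.sqrt_sq (norm_nonneg _)] at h
  convert h using 1
  ext v
  simp only [FunLike.coe_smul, Pi.smul_apply, innerSL_apply_apply, smul_eq_mul]
  field_simp
  ring

theorem HasDerivAt.hasGradientAt_comp_norm [CompleteSpace E] {φ : ℝ → ℝ} {φ' : ℝ} {x : E}
    (hφ : HasDerivAt φ φ' ‖x‖) (hx : x ≠ 0) :
    HasGradientAt (fun y => φ ‖y‖) ((φ' / ‖x‖) • x) x := by
  rw [hasGradientAt_iff_hasFDerivAt]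
  refine (hφ.comp_hasFDerivAt x (hasFDerivAt_norm_of_ne_zero hx)).congr_fderiv ?_
  ext v
  simp only [smul_apply, coe_innerSL_apply, smul_eq_mul, map_smul,
    InnerProductSpace.toDual_apply_apply]
  ring

end Radial

section Divergence

variable {N : ℕ}

theorem Filter.EventuallyEq.ediv_eq {F G : EuclideanSpace ℝ (Fin N) → EuclideanSpace ℝ (Fin N)}
    {x : EuclideanSpace ℝ (Fin N)} (h : F =ᶠ[𝓝 x] G) : ediv F x = ediv G x := by
  rw [ediv, ediv, h.fderiv_eq]

theorem HasFDerivAt.ediv_smul_self {c : EuclideanSpace ℝ (Fin N) → ℝ}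
    {c' : EuclideanSpace ℝ (Fin N) →L[ℝ] ℝ} {x : EuclideanSpace ℝ (Fin N)}
    (hc : HasFDerivAt c c' x) : ediv (fun y => c y • y) x = N * c x + c' x := by
  rw [ediv, HasFDerivAt.fderiv (f := fun y => c y • y) (hc.smul (hasFDerivAt_id x))]
  simp only [add_apply, smul_apply, ContinuousLinearMap.id_apply,
    ContinuousLinearMap.smulRight_apply, PiLp.add_apply, PiLp.smul_apply, PiLp.single_eq_same,
    smul_eq_mul, mul_one, Finset.sum_add_distrib, Finset.sum_const, Finset.card_univ,
    Fintype.card_fin, nsmul_eq_mul, add_right_inj]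
  conv_rhs => rw [← (EuclideanSpace.basisFun (Fin N) ℝ).sum_repr x]
  simp [mul_comm]

theorem ediv_radial {Φ : ℝ → ℝ} {Φ' : ℝ} {x : EuclideanSpace ℝ (Fin N)} (hx : x ≠ 0)
    (hΦ : HasDerivAt Φ Φ' ‖x‖) :
    ediv (fun y => (Φ ‖y‖ / ‖y‖ ^ N) • y) x = Φ' / ‖x‖ ^ (N - 1) := by
  obtain ⟨n, rfl⟩ : ∃ n, N = n + 1 :=
    Nat.exists_eq_succ_of_ne_zero (by rintro rfl; exact hx (Subsingleton.elim _ _))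
  have hr : 0 < ‖x‖ := norm_pos_iff.mpr hx
  have hψ := (hΦ.div (hasDerivAt_pow (n + 1) ‖x‖) (by positivity)).comp_hasFDerivAt x
    (hasFDerivAt_norm_of_ne_zero hx)
  rw [HasFDerivAt.ediv_smul_self (c := fun y => Φ ‖y‖ / ‖y‖ ^ (n + 1)) hψ]
  simp only [FunLike.coe_smul, Pi.smul_apply, innerSL_apply_apply, real_inner_self_eq_norm_sq,
    smul_eq_mul, Nat.add_sub_cancel]
  field_simp
  push_cast
  ring

end Divergence

section Logistic

variable {p lam : ℝ}

def logisticRpow (p lam r : ℝ) : ℝ := lam * r ^ p / (1 + lam * r ^ p)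

theorem hasDerivAt_logisticRpow (hlam : 0 ≤ lam) {r : ℝ} (hr : 0 < r) :
    HasDerivAt (logisticRpow p lam)
      (p * logisticRpow p lam r * (1 - logisticRpow p lam r) / r) r := by
  have hs : HasDerivAt (fun r => lam * r ^ p) (lam * (p * r ^ (p - 1))) r :=
    (Real.hasDerivAt_rpow_const (Or.inl hr.ne')).const_mul lam
  have hb : 0 < 1 + lam * r ^ p := by positivity
  refine (hs.fun_div (hs.const_add 1) hb.ne').congr_deriv ?_
  rw [logisticRpow, Real.rpow_sub_one hr.ne']
  field_simp

theorem hasDerivAt_log_div_one_add_rpow_pow {C : ℝ} (n : ℕ) (hC : 0 < C) (hlam : 0 ≤ lam)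
    {r : ℝ} (hr : 0 < r) :
    HasDerivAt (fun r => Real.log (C / (1 + lam * r ^ p) ^ n))
      (-(n * p * logisticRpow p lam r / r)) r := by
  have hs : HasDerivAt (fun r => 1 + lam * r ^ p) (lam * (p * r ^ (p - 1))) r :=
    ((Real.hasDerivAt_rpow_const (Or.inl hr.ne')).const_mul lam).const_add 1
  have hb : 0 < 1 + lam * r ^ p := by positivity
  refine (((hasDerivAt_const r C).fun_div (hs.fun_pow n) (by positivity)).log
    (by positivity)).congr_deriv ?_
  rw [logisticRpow, Real.rpow_sub_one hr.ne']
  rcases n with _ | n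
  · simp
  · simp only [Nat.add_sub_cancel]
    field_simp
    ring

theorem continuousAt_logisticRpow_zero (hp : 0 < p) : ContinuousAt (logisticRpow p lam) 0 := by
  have h : ContinuousAt (fun r : ℝ => r ^ p) 0 := Real.continuousAt_rpow_const _ _ (Or.inr hp.le)
  exact (h.const_mul lam).div ((h.const_mul lam).const_add 1)
    (by simp [Real.zero_rpow hp.ne'])

theorem tendsto_logisticRpow_atTop (hp : 0 < p) (hlam : 0 < lam) :
    Tendsto (logisticRpow p lam) atTop (𝓝 1) := by
  have hb : Tendsto (fun r : ℝ => 1 + lam * r ^ p) atTop atTop :=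
    tendsto_atTop_add_const_left _ _ ((tendsto_rpow_atTop hp).const_mul_atTop hlam)
  have h : Tendsto (fun r : ℝ => 1 - (1 + lam * r ^ p)⁻¹) atTop (𝓝 (1 - 0)) :=
    hb.inv_tendsto_atTop.const_sub 1
  rw [sub_zero] at h
  refine h.congr' ?_
  filter_upwards [eventually_ge_atTop 0] with r hr
  have hb : 0 < 1 + lam * r ^ p := by positivity
  rw [logisticRpow]
  field_simp
  ring

end Logistic

section Ulam

variable (N : ℕ) (α lam : ℝ)

def ulamExponent : ℝ := N * (α + 1) / (N - 1)

-- `Ulam N α lam x` unfolds to `ulamProfile N α lam ‖x‖`.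
def ulamProfile (r : ℝ) : ℝ :=
  Real.log (cconst N * (α + 1) ^ N * lam ^ (N - 1) / (1 + lam * r ^ ulamExponent N α) ^ N)

-- `(r |∇U|)^{N-1}` on `|x| = r`: the flux of `|∇U|^{N-2} ∇U` through that sphere per unit
-- solid angle.
def ulamFlux (r : ℝ) : ℝ :=
  (N * ulamExponent N α * logisticRpow (ulamExponent N α) lam r) ^ (N - 1)

variable {N α lam}

theorem sub_one_mul_ulamExponent (hN : 2 ≤ N) :
    ((N : ℝ) - 1) * ulamExponent N α = N * (α + 1) := by
  have : (N : ℝ) - 1 ≠ 0 := by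
    have : (2 : ℝ) ≤ N := by exact_mod_cast hN
    linarith
  rw [ulamExponent]
  field_simp

theorem ulamExponent_pos (hN : 2 ≤ N) (hα : -1 < α) : 0 < ulamExponent N α := by
  have : (1 : ℝ) < N := by exact_mod_cast hN
  rw [ulamExponent]
  apply div_pos <;> nlinarith

theorem cconst_pos (hN : 2 ≤ N) : 0 < cconst N := by
  have : (1 : ℝ) < N := by exact_mod_cast hN
  rw [cconst]
  have : 0 < (N : ℝ) ^ 2 / (N - 1) := div_pos (by positivity) (by linarith)
  positivity

theorem cconst_mul_pow_mul_pow_pos (hN : 2 ≤ N) (hα : -1 < α) (hlam : 0 < lam) :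
    0 < cconst N * (α + 1) ^ N * lam ^ (N - 1) := by
  have := cconst_pos hN
  have : 0 < α + 1 := by linarith
  positivity

-- This identity is what singles out `c_N`.
theorem cconst_mul_pow_eq (hN : 2 ≤ N) :
    cconst N * (α + 1) ^ N =
      ((N : ℝ) - 1) * ulamExponent N α * (N * ulamExponent N α) ^ (N - 1) := by
  obtain ⟨n, rfl⟩ : ∃ n, N = n + 1 := ⟨N - 1, by omega⟩
  have hn : (n : ℝ) ≠ 0 := by norm_cast; omega
  rw [cconst, ulamExponent, Nat.add_sub_cancel, Nat.cast_add_one, add_sub_cancel_right]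
  simp only [mul_pow, div_pow, ← pow_mul]
  field_simp
  ring

variable {x : EuclideanSpace ℝ (Fin N)}

theorem hasGradientAt_Ulam (hN : 2 ≤ N) (hα : -1 < α) (hlam : 0 < lam) (hx : x ≠ 0) :
    HasGradientAt (Ulam N α lam)
      ((-(N * ulamExponent N α * logisticRpow (ulamExponent N α) lam ‖x‖ / ‖x‖) / ‖x‖) • x) x :=
  (hasDerivAt_log_div_one_add_rpow_pow N (cconst_mul_pow_mul_pow_pos hN hα hlam) hlam.le
    (norm_pos_iff.mpr hx)).hasGradientAt_comp_norm hx

theorem rpow_norm_gradient_Ulam_smul_eq (hN : 2 ≤ N) (hα : -1 < α) (hlam : 0 < lam) (hx : x ≠ 0) :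
    ‖gradient (Ulam N α lam) x‖ ^ ((N : ℝ) - 2) • gradient (Ulam N α lam) x =
      (-ulamFlux N α lam ‖x‖ / ‖x‖ ^ N) • x := by
  have hr : 0 < ‖x‖ := norm_pos_iff.mpr hx
  have hp := ulamExponent_pos hN hα
  have hh : 0 < logisticRpow (ulamExponent N α) lam ‖x‖ := by
    rw [logisticRpow]; positivity
  rw [(hasGradientAt_Ulam hN hα hlam hx).gradient, smul_smul, ulamFlux]
  set a := (N : ℝ) * ulamExponent N α * logisticRpow (ulamExponent N α) lam ‖x‖
  have ha : 0 < a := by positivity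
  congr 1
  rw [norm_smul, neg_div, norm_neg, Real.norm_of_nonneg (by positivity)]
  obtain ⟨n, rfl⟩ : ∃ n, N = n + 2 := ⟨N - 2, by omega⟩
  rw [show ((n + 2 : ℕ) : ℝ) - 2 = n by norm_num, Real.rpow_natCast,
    show n + 2 - 1 = n + 1 from rfl, div_mul_cancel₀ _ hr.ne', div_pow]
  field_simp
  ring

theorem hasDerivAt_ulamFlux (hN : 2 ≤ N) (hα : -1 < α) (hlam : 0 < lam) {r : ℝ} (hr : 0 < r) :
    HasDerivAt (ulamFlux N α lam)
      (r ^ (N - 1) * (r ^ ((N : ℝ) * α) * Real.exp (ulamProfile N α lam r))) r := by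
  have hp := ulamExponent_pos hN hα
  have hb : 0 < 1 + lam * r ^ ulamExponent N α := by positivity
  have hpow : (r ^ ulamExponent N α) ^ (N - 1) = r ^ N * r ^ ((N : ℝ) * α) := by
    rw [← Real.rpow_natCast, ← Real.rpow_mul hr.le, ← Real.rpow_natCast r N, ← Real.rpow_add hr,
      Nat.cast_sub (by omega), mul_comm, Nat.cast_one, sub_one_mul_ulamExponent hN]
    ring_nf
  refine (((hasDerivAt_logisticRpow hlam.le hr).const_mul
    (N * ulamExponent N α)).pow (N - 1)).congr_deriv ?_
  have hC := cconst_mul_pow_mul_pow_pos hN hα hlam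
  rw [ulamProfile, Real.exp_log (by positivity), cconst_mul_pow_eq hN, logisticRpow]
  set p := ulamExponent N α
  set s := r ^ p
  obtain ⟨n, rfl⟩ : ∃ n, N = n + 2 := ⟨N - 2, by omega⟩
  simp only [show n + 2 - 1 = n + 1 from rfl, Nat.add_sub_cancel, div_pow, mul_pow] at hpow ⊢
  field_simp
  push_cast at hpow ⊢
  linear_combination ((n + 1) * (n + 2) ^ (n + 1) * p ^ (n + 1) * lam ^ (n + 1) *
    (1 + lam * s) ^ (n + 2)) * hpow

end Ulam

/-- `U_{α,λ}` solves `-Δ_N u = |x|^{Nα} e^u` pointwise on `ℝ^N \ {0}` and has finite mass. -/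
theorem statement18 (N : ℕ) (hN : 2 ≤ N) (α lam : ℝ) (hα : -1 < α) (hlam : 0 < lam) :
    (∀ x : EuclideanSpace ℝ (Fin N), x ≠ 0 →
      -ediv (fun y => ‖gradient (Ulam N α lam) y‖ ^ ((N : ℝ) - 2) •
          gradient (Ulam N α lam) y) x
        = ‖x‖ ^ ((N : ℝ) * α) * Real.exp (Ulam N α lam x)) ∧
    Integrable (fun x : EuclideanSpace ℝ (Fin N) =>
      ‖x‖ ^ ((N : ℝ) * α) * Real.exp (Ulam N α lam x)) := by
  refine ⟨fun x hx => ?_, ?_⟩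
  · have hfield : (fun y => ‖gradient (Ulam N α lam) y‖ ^ ((N : ℝ) - 2) •
        gradient (Ulam N α lam) y) =ᶠ[𝓝 x] fun y => (-ulamFlux N α lam ‖y‖ / ‖y‖ ^ N) • y :=
      (eventually_ne_nhds hx).mono fun y hy => rpow_norm_gradient_Ulam_smul_eq hN hα hlam hy
    have hr : 0 < ‖x‖ := norm_pos_iff.mpr hx
    rw [hfield.ediv_eq, ediv_radial hx (hasDerivAt_ulamFlux hN hα hlam hr).fun_neg, neg_div,
      neg_neg]
    exact mul_div_cancel_left₀ _ (pow_pos hr _).ne'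
  · have : NeZero N := ⟨by omega⟩
    refine (integrable_fun_norm_addHaar volume
      (f := fun r => r ^ ((N : ℝ) * α) * Real.exp (ulamProfile N α lam r))).mpr ?_
    rw [finrank_euclideanSpace_fin]
    have hp := ulamExponent_pos hN hα
    exact integrableOn_Ioi_deriv_of_nonneg
      (((continuousAt_logisticRpow_zero hp).const_mul _).pow _).continuousWithinAt
      (fun r hr => hasDerivAt_ulamFlux hN hα hlam hr) (fun r (hr : 0 < r) => by positivity)
      (((tendsto_logisticRpow_atTop hp hlam).const_mul _).pow _)
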